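/- Let a, b ∈ ℝᵈ with a_k < b_k for each k and Q = [a, b]. Let κ : ℝᵈ → ℝ be continuously differentiable with κ ≥ 0 on Q, let u ∈ ℝ³ with ‖u‖ = 1, and let m : ℝᵈ → ℝ³ be twice continuously differentiable on a neighborhood of Q, satisfying for each component i and each face of Q normal to e_k the condition κ(x) ∂_k m_i(x) = 0. Define h_eff[m] = div(κ ∇m) − ( m − ⟨m, u⟩ u ) (componentwise divergence form). Then ∫_Q ⟨ h_eff[m](x), m(x) ⟩ dx = − ∫_Q ( κ |∇m|² + ‖m‖² − ⟨m, u⟩² ) dx = −2 F[m] ≤ 0. -/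

import Mathlib

/-! Writing `Gₖ = Σᵢ κ ∂ₖmᵢ mᵢ`, the product rule gives `Σₖ ∂ₖGₖ = ⟨div(κ∇m), m⟩ + κ|∇m|²`.
The integral of `Σₖ ∂ₖGₖ` over the box is zero by the divergence theorem, because the Neumann
condition makes `Gₖ` vanish on the two faces normal to `eₖ`. This is the identity; the sign then
comes from `κ ≥ 0` and Cauchy–Schwarz `⟨m, u⟩² ≤ ‖m‖²` for the unit vector `u`. -/

open RealInnerProductSpace MeasureTheory

/-- The `k`-th partial derivative `∂ₖ f x` of a scalar function on `ℝᵈ`. -/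
noncomputable def pd {d : ℕ} (k : Fin d) (f : EuclideanSpace ℝ (Fin d) → ℝ)
    (x : EuclideanSpace ℝ (Fin d)) : ℝ :=
  fderiv ℝ f x (EuclideanSpace.single k 1)

section PartialDerivative

variable {d : ℕ} {k : Fin d} {x : EuclideanSpace ℝ (Fin d)}

theorem pd_mul {f g : EuclideanSpace ℝ (Fin d) → ℝ} (hf : DifferentiableAt ℝ f x)
    (hg : DifferentiableAt ℝ g x) :
    pd k (fun y => f y * g y) x = pd k f x * g x + f x * pd k g x := by
  simp only [pd, fderiv_fun_mul hf hg, add_apply, smul_apply, smul_eq_mul]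
  ring

theorem pd_sum {ι : Type*} (s : Finset ι) {f : ι → EuclideanSpace ℝ (Fin d) → ℝ}
    (hf : ∀ i ∈ s, DifferentiableAt ℝ (f i) x) :
    pd k (fun y => ∑ i ∈ s, f i y) x = ∑ i ∈ s, pd k (f i) x := by
  simp only [pd, fderiv_fun_sum hf, sum_apply]

theorem contDiffOn_pd {f : EuclideanSpace ℝ (Fin d) → ℝ} {U : Set (EuclideanSpace ℝ (Fin d))}
    {n N : WithTop ℕ∞} (hf : ContDiffOn ℝ N f U) (hU : IsOpen U) (hn : n + 1 ≤ N) (k : Fin d) :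
    ContDiffOn ℝ n (pd k f) U :=
  (hf.fderiv_of_isOpen hU hn).clm_apply contDiffOn_const

theorem continuousOn_pd {f : EuclideanSpace ℝ (Fin d) → ℝ} {U : Set (EuclideanSpace ℝ (Fin d))}
    (hf : ContDiffOn ℝ 1 f U) (hU : IsOpen U) (k : Fin d) : ContinuousOn (pd k f) U :=
  (contDiffOn_pd (n := 0) hf hU (by norm_num) k).continuousOn

end PartialDerivative

theorem sq_inner_le_sq_norm {E : Type*} [NormedAddCommGroup E] [InnerProductSpace ℝ E]
    (v : E) {u : E} (hu : ‖u‖ = 1) : ⟪v, u⟫ ^ 2 ≤ ‖v‖ ^ 2 := by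
  have h := abs_real_inner_le_norm v u
  rw [hu, mul_one] at h
  simpa only [sq_abs] using pow_le_pow_left₀ (abs_nonneg _) h 2

theorem sum_pd_flux_mul {d : ℕ} {ι : Type*} [Fintype ι] {κ : EuclideanSpace ℝ (Fin d) → ℝ}
    {m : EuclideanSpace ℝ (Fin d) → EuclideanSpace ℝ ι} {x : EuclideanSpace ℝ (Fin d)}
    (hflux : ∀ i k, DifferentiableAt ℝ (fun y => κ y * pd k (fun z => m z i) y) x)
    (hm : ∀ i, DifferentiableAt ℝ (fun y => m y i) x) :
    ∑ k, pd k (fun y => ∑ i, κ y * pd k (fun z => m z i) y * m y i) x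
      = ∑ i, (∑ k, pd k (fun y => κ y * pd k (fun z => m z i) y) x) * m x i
        + κ x * ∑ k, ∑ i, pd k (fun z => m z i) x ^ 2 := by
  have hprod : ∀ k, pd k (fun y => ∑ i, κ y * pd k (fun z => m z i) y * m y i) x
      = ∑ i, (pd k (fun y => κ y * pd k (fun z => m z i) y) x * m x i
        + κ x * pd k (fun z => m z i) x ^ 2) := fun k => by
    rw [pd_sum _ fun i _ => (hflux i k).fun_mul (hm i)]
    refine Finset.sum_congr rfl fun i _ => ?_
    rw [pd_mul (hflux i k) (hm i)]
    ring
  simp only [hprod, Finset.sum_add_distrib, Finset.sum_mul, Finset.mul_sum]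
  rw [Finset.sum_comm]

section EuclideanBox

variable {ι : Type*} {a b : ι → ℝ}

def euclideanBox (a b : ι → ℝ) : Set (EuclideanSpace ℝ ι) :=
  WithLp.ofLp ⁻¹' Set.Icc a b

theorem mem_euclideanBox {x : EuclideanSpace ℝ ι} :
    x ∈ euclideanBox a b ↔ ∀ k, a k ≤ x k ∧ x k ≤ b k := by
  simp only [euclideanBox, Set.mem_preimage, Set.mem_Icc, Pi.le_def, forall_and]

theorem isCompact_euclideanBox : IsCompact (euclideanBox a b) :=
  (PiLp.continuousLinearEquiv 2 ℝ (fun _ : ι => ℝ)).toHomeomorph.isCompact_preimage.2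
    isCompact_Icc

theorem setIntegral_euclideanBox [Fintype ι] (f : EuclideanSpace ℝ ι → ℝ) :
    ∫ x in euclideanBox a b, f x = ∫ y in Set.Icc a b, f (WithLp.toLp 2 y) :=
  (EuclideanSpace.volume_preserving_symm_measurableEquiv_toLp ι).setIntegral_preimage_emb
    (MeasurableEquiv.measurableEmbedding _) (fun y => f (WithLp.toLp 2 y)) (Set.Icc a b)

end EuclideanBox

theorem integral_euclideanBox_sum_pd_eq_zero {d : ℕ} {a b : Fin d → ℝ} (hab : a ≤ b)
    {U : Set (EuclideanSpace ℝ (Fin d))} (hU : IsOpen U) (hQU : euclideanBox a b ⊆ U)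
    {F : Fin d → EuclideanSpace ℝ (Fin d) → ℝ} (hF : ∀ k, ContDiffOn ℝ 1 (F k) U)
    (hface : ∀ k, ∀ x ∈ euclideanBox a b, (x k = a k ∨ x k = b k) → F k x = 0) :
    ∫ x in euclideanBox a b, ∑ k, pd k (F k) x = 0 := by
  cases d with
  | zero => simp
  | succ n =>
    have hFU : ∀ y ∈ Set.Icc a b, WithLp.toLp 2 y ∈ U := fun y hy => hQU hy
    have hface_integral : ∀ k, ∀ c ∈ ({a k, b k} : Set ℝ),
        ∫ y in Set.Icc (a ∘ k.succAbove) (b ∘ k.succAbove),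
          F k (WithLp.toLp 2 (k.insertNth c y)) = 0 := by
      intro k c hc
      refine setIntegral_eq_zero_of_forall_eq_zero fun y hy => hface k _ ?_ ?_
      · refine Fin.insertNth_mem_Icc.2 ⟨?_, hy⟩
        rcases hc with rfl | rfl
        exacts [⟨le_rfl, hab k⟩, ⟨hab k, le_rfl⟩]
      · simpa using hc
    have H := integral_divergence_of_hasFDerivAt_off_countable' a b hab
      (fun k y => F k (WithLp.toLp 2 y))
      (fun k y => (fderiv ℝ (F k) (WithLp.toLp 2 y)).comp
        (PiLp.continuousLinearEquiv 2 ℝ (fun _ : Fin (n + 1) => ℝ)).symm.toContinuousLinearMap)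
      ∅ Set.countable_empty
      (fun k => (hF k).continuousOn.comp (PiLp.continuous_toLp 2 _).continuousOn hFU)
      (fun y hy k => by
        have hyU : WithLp.toLp 2 y ∈ U :=
          hFU y (Set.Ioo_subset_Icc_self (Set.pi_univ_Ioo_subset a b hy.1))
        exact (((hF k).differentiableOn one_ne_zero _ hyU).differentiableAt
          (hU.mem_nhds hyU)).hasFDerivAt.comp y
            (PiLp.continuousLinearEquiv 2 ℝ (fun _ : Fin (n + 1) => ℝ)).symm.hasFDerivAt)
      (((continuousOn_finsetSum _ fun k _ => continuousOn_pd (hF k) hU k).comp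
        (PiLp.continuous_toLp 2 _).continuousOn hFU).integrableOn_compact isCompact_Icc)
    rw [setIntegral_euclideanBox]
    refine H.trans (Finset.sum_eq_zero fun k _ => ?_)
    rw [hface_integral k _ (Or.inr rfl), hface_integral k _ (Or.inl rfl), sub_zero]

theorem integral_euclideanBox_green_identity_of_neumann {d : ℕ} {ι : Type*} [Fintype ι]
    {a b : Fin d → ℝ} (hab : a ≤ b) {U : Set (EuclideanSpace ℝ (Fin d))} (hU : IsOpen U)
    (hQU : euclideanBox a b ⊆ U) {κ : EuclideanSpace ℝ (Fin d) → ℝ} (hκ : ContDiffOn ℝ 1 κ U)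
    {m : EuclideanSpace ℝ (Fin d) → EuclideanSpace ℝ ι} (hm : ContDiffOn ℝ 2 m U)
    (hbc : ∀ i k, ∀ x ∈ euclideanBox a b,
      (x k = a k ∨ x k = b k) → κ x * pd k (fun y => m y i) x = 0) :
    ∫ x in euclideanBox a b,
      (∑ i, (∑ k, pd k (fun y => κ y * pd k (fun z => m z i) y) x) * m x i
        + κ x * ∑ k, ∑ i, pd k (fun z => m z i) x ^ 2) = 0 := by
  have hmi : ∀ i, ContDiffOn ℝ 2 (fun y => m y i) U := (contDiffOn_piLp 2).1 hm
  have hflux : ∀ i k, ContDiffOn ℝ 1 (fun y => κ y * pd k (fun z => m z i) y) U :=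
    fun i k => hκ.mul (contDiffOn_pd (hmi i) hU (by norm_num) k)
  have hG : ∀ k, ContDiffOn ℝ 1 (fun y => ∑ i, κ y * pd k (fun z => m z i) y * m y i) U :=
    fun k => ContDiffOn.sum fun i _ => (hflux i k).mul ((hmi i).of_le one_le_two)
  rw [← integral_euclideanBox_sum_pd_eq_zero hab hU hQU hG
    fun k x hx hface => Finset.sum_eq_zero fun i _ => by rw [hbc i k x hx hface, zero_mul]]
  refine setIntegral_congr_fun isCompact_euclideanBox.measurableSet fun x hx => ?_
  have hxU := hU.mem_nhds (hQU hx)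
  exact (sum_pd_flux_mul
    (fun i k => ((hflux i k).contDiffAt hxU).differentiableAt one_ne_zero)
    (fun i => ((hmi i).contDiffAt hxU).differentiableAt two_ne_zero)).symm

/-- On a box `Q = [a, b] ⊆ ℝᵈ`, with `κ ≥ 0` of class `C¹`, unit easy axis `u`,
`m : ℝᵈ → ℝ³` twice continuously differentiable on a neighborhood of `Q` satisfying
the Neumann boundary condition `κ ∂ₖ mᵢ = 0` on the faces normal to `eₖ`, the
effective field `h_eff[m] = div(κ∇m) − (m − ⟨m,u⟩u)` satisfies
`∫_Q ⟨h_eff[m], m⟩ = −∫_Q (κ |∇m|² + ‖m‖² − ⟨m,u⟩²) = −2F[m] ≤ 0`. -/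
theorem effective_field_energy_identity {d : ℕ}
    (a b : Fin d → ℝ) (hab : ∀ k, a k < b k)
    (Q : Set (EuclideanSpace ℝ (Fin d)))
    (hQ : Q = {x : EuclideanSpace ℝ (Fin d) | ∀ k, a k ≤ x k ∧ x k ≤ b k})
    (κ : EuclideanSpace ℝ (Fin d) → ℝ) (hκ : ContDiff ℝ 1 κ)
    (hκ0 : ∀ x ∈ Q, 0 ≤ κ x)
    (u : EuclideanSpace ℝ (Fin 3)) (hu : ‖u‖ = 1)
    (m : EuclideanSpace ℝ (Fin d) → EuclideanSpace ℝ (Fin 3))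
    (U : Set (EuclideanSpace ℝ (Fin d))) (hU : IsOpen U) (hQU : Q ⊆ U)
    (hm : ContDiffOn ℝ 2 m U)
    (hbc : ∀ (i : Fin 3) (k : Fin d), ∀ x ∈ Q,
      (x k = a k ∨ x k = b k) → κ x * pd k (fun y => m y i) x = 0) :
    (∫ x in Q,
        ((∑ i, (∑ k, pd k (fun y => κ y * pd k (fun z => m z i) y) x) * m x i)
          - (‖m x‖ ^ 2 - ⟪m x, u⟫ ^ 2))
      = - ∫ x in Q,
          (κ x * ∑ k, ∑ i, (pd k (fun z => m z i) x) ^ 2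
            + ‖m x‖ ^ 2 - ⟪m x, u⟫ ^ 2)) ∧
    (∫ x in Q,
        ((∑ i, (∑ k, pd k (fun y => κ y * pd k (fun z => m z i) y) x) * m x i)
          - (‖m x‖ ^ 2 - ⟪m x, u⟫ ^ 2))
      ≤ 0) := by
  obtain rfl : Q = euclideanBox a b := hQ.trans (Set.ext fun x => mem_euclideanBox.symm)
  have hgreen := integral_euclideanBox_green_identity_of_neumann (fun k => (hab k).le) hU hQU
    hκ.contDiffOn hm hbc
  have hmi : ∀ i, ContDiffOn ℝ 2 (fun y => m y i) U := (contDiffOn_piLp 2).1 hm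
  have hdm : ∀ i k, ContinuousOn (pd k fun y => m y i) U :=
    fun i k => continuousOn_pd ((hmi i).of_le one_le_two) hU k
  have hdflux : ∀ i k, ContinuousOn (pd k fun y => κ y * pd k (fun z => m z i) y) U :=
    fun i k => continuousOn_pd (hκ.contDiffOn.mul (contDiffOn_pd (hmi i) hU (by norm_num) k)) hU k
  have hκc := hκ.continuous
  have hmc := hm.continuousOn
  have hidentity : ∫ x in euclideanBox a b,
        ((∑ i, (∑ k, pd k (fun y => κ y * pd k (fun z => m z i) y) x) * m x i)
          - (‖m x‖ ^ 2 - ⟪m x, u⟫ ^ 2))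
      = - ∫ x in euclideanBox a b,
          (κ x * ∑ k, ∑ i, (pd k (fun z => m z i) x) ^ 2 + ‖m x‖ ^ 2 - ⟪m x, u⟫ ^ 2) := by
    rw [← zero_sub, ← hgreen, ← integral_sub
      (((by fun_prop : ContinuousOn _ U).mono hQU).integrableOn_compact isCompact_euclideanBox)
      (((by fun_prop : ContinuousOn _ U).mono hQU).integrableOn_compact isCompact_euclideanBox)]
    exact setIntegral_congr_fun isCompact_euclideanBox.measurableSet fun x _ => by ring
  refine ⟨hidentity, ?_⟩
  rw [hidentity, neg_nonpos]
  refine setIntegral_nonneg isCompact_euclideanBox.measurableSet fun x hx => ?_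
  have hexchange : 0 ≤ κ x * ∑ k, ∑ i, pd k (fun z => m z i) x ^ 2 :=
    mul_nonneg (hκ0 x hx) (by positivity)
  linarith [sq_inner_le_sq_norm (m x) hu]
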